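/- Let n ≥ 2 be an integer and A ≥ 1 a real constant, and let h : (0,1) → (0,∞) be a nonincreasing function satisfying h(r²) ≤ A·h(r) for every r ∈ (0,1). Then there exist a constant C > 0 (depending only on n and A) and ε₀ ∈ (0,1) such that for every ε ∈ (0, ε₀), ∫_{B(0,ε)} h(‖y‖) dy ≤ C · h(ε) · εⁿ. -/

import Mathlib

open MeasureTheory Set
open scoped ENNReal

/-- If `h` is positive and nonincreasing on `(0,1)` and satisfies the doubling-type
condition `h (r^2) ≤ A * h r` there, then for some `C > 0` and `ε₀ ∈ (0,1)`, for all `ε ∈ (0,ε₀)`,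
`∫_{B(0,ε)} h ‖y‖ dy ≤ C * h ε * ε ^ n`. -/
theorem riesz_uniqueness_multiplicity_integral_bound
    (n : ℕ) (hn : 2 ≤ n) (A : ℝ) (hA : 1 ≤ A)
    (h : ℝ → ℝ)
    (hpos : ∀ r ∈ Ioo (0:ℝ) 1, 0 < h r)
    (hmono : AntitoneOn h (Ioo (0:ℝ) 1))
    (hdbl : ∀ r ∈ Ioo (0:ℝ) 1, h (r ^ 2) ≤ A * h r) :
    ∃ C > (0:ℝ), ∃ ε₀ ∈ Ioo (0:ℝ) 1, ∀ ε ∈ Ioo (0:ℝ) ε₀,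
      (∫ y in Metric.ball (0 : EuclideanSpace ℝ (Fin n)) ε, h ‖y‖) ≤ C * h ε * ε ^ n := by
  classical
  have hA0 : (0:ℝ) < A := lt_of_lt_of_le one_pos hA
  haveI : Nonempty (Fin n) := ⟨⟨0, by omega⟩⟩
  haveI : Nontrivial (EuclideanSpace ℝ (Fin n)) := inferInstance
  set E := EuclideanSpace ℝ (Fin n)
  set W : ℝ≥0∞ := volume (Metric.ball (0 : E) 1) with hWdef
  have hW0 : 0 < W := Metric.measure_ball_pos _ _ one_pos
  have hWt : W ≠ ⊤ := measure_ball_lt_top.ne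
  have hWr : 0 < W.toReal := ENNReal.toReal_pos hW0.ne' hWt
  have hε₀1 : (2*A)⁻¹ < 1 := by
    rw [inv_lt_one_iff₀]; right; linarith
  refine ⟨2 * A * W.toReal, by positivity, (2*A)⁻¹, ⟨by positivity, hε₀1⟩, ?_⟩
  intro ε ⟨hε0, hεlt⟩
  have hε1 : ε < 1 := lt_trans hεlt hε₀1
  have hεmem : ε ∈ Ioo (0:ℝ) 1 := ⟨hε0, hε1⟩
  have hq : A * ε ^ n < 1/2 := by
    have h1 : ε ^ n ≤ ε := pow_le_of_le_one hε0.le hε1.le (by omega)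
    have h2 : A * ε < A * (2*A)⁻¹ := by
      exact mul_lt_mul_of_pos_left hεlt hA0
    have h3 : A * (2*A)⁻¹ = 1/2 := by field_simp
    nlinarith
  have hq0 : 0 < A * ε ^ n := by positivity
  set q : ℝ := A * ε ^ n with hqdef
  -- the radii
  set r : ℕ → ℝ := fun k => ε ^ (2^k) with hrdef
  have hr0 : ∀ k, 0 < r k := fun k => pow_pos hε0 _
  have hr1 : ∀ k, r k < 1 := fun k => pow_lt_one₀ hε0.le hε1 (by positivity)
  have hrmem : ∀ k, r k ∈ Ioo (0:ℝ) 1 := fun k => ⟨hr0 k, hr1 k⟩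
  have hrz : r 0 = ε := by simp [hrdef]
  have hrsq : ∀ k, r (k+1) = (r k)^2 := by
    intro k
    show ε ^ (2^(k+1)) = (ε ^ (2^k))^2
    rw [← pow_mul, pow_succ]
  have hrmono : ∀ i j, i ≤ j → r j ≤ r i := by
    intro i j hij
    exact pow_le_pow_of_le_one hε0.le hε1.le (Nat.pow_le_pow_right (by norm_num) hij)
  -- the doubling estimate iterated
  have hAk : ∀ k, h (r k) ≤ A ^ k * h ε := by
    intro k
    induction k with
    | zero => simp [hrz]
    | succ k ih =>
      calc h (r (k+1)) = h ((r k)^2) := by rw [hrsq]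
        _ ≤ A * h (r k) := hdbl _ (hrmem k)
        _ ≤ A * (A ^ k * h ε) := mul_le_mul_of_nonneg_left ih hA0.le
        _ = A ^ (k+1) * h ε := by ring
  -- the annuli
  set S : ℕ → Set E := fun k => Metric.ball 0 (r k) \ Metric.ball 0 (r (k+1)) with hSdef
  have hSm : ∀ k, MeasurableSet (S k) :=
    fun k => measurableSet_ball.diff measurableSet_ball
  have hSdisj : Pairwise (Function.onFun Disjoint S) := by
    refine (pairwise_disjoint_on S).mpr ?_
    intro i j hij
    refine Set.disjoint_left.mpr ?_
    intro y hyi hyj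
    have h1 : r (i+1) ≤ ‖y‖ := by
      have := hyi.2
      simpa [mem_ball_zero_iff, not_lt] using this
    have h2 : ‖y‖ < r j := by
      simpa [mem_ball_zero_iff] using hyj.1
    have h3 : r j ≤ r (i+1) := hrmono _ _ hij
    linarith
  have hSU : (⋃ k, S k) = Metric.ball (0:E) ε \ {0} := by
    ext y
    simp only [mem_iUnion, hSdef, mem_diff, mem_ball_zero_iff, mem_singleton_iff, not_lt]
    constructor
    · rintro ⟨k, hk1, hk2⟩
      refine ⟨lt_of_lt_of_le hk1 (hrz ▸ hrmono 0 k (Nat.zero_le k)), ?_⟩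
      intro hy0
      rw [hy0, norm_zero] at hk2
      exact absurd hk2 (not_le.mpr (hr0 (k+1)))
    · rintro ⟨hyε, hy0⟩
      have hny : 0 < ‖y‖ := norm_pos_iff.mpr hy0
      have hex : ∃ m, r (m+1) ≤ ‖y‖ := by
        obtain ⟨m, hm⟩ := exists_pow_lt_of_lt_one hny hε1
        refine ⟨m, le_of_lt (lt_of_le_of_lt ?_ hm)⟩
        exact pow_le_pow_of_le_one hε0.le hε1.le
          (le_trans (Nat.le_of_lt (Nat.lt_two_pow_self (n := m))) (Nat.pow_le_pow_right (by norm_num) (Nat.le_succ m)))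
      have hk1 : r (Nat.find hex + 1) ≤ ‖y‖ := Nat.find_spec hex
      have hk2 : ‖y‖ < r (Nat.find hex) := by
        rcases Nat.eq_zero_or_pos (Nat.find hex) with h0 | hpos'
        · rw [h0, hrz]; exact hyε
        · have hj : Nat.find hex - 1 < Nat.find hex := Nat.sub_lt hpos' one_pos
          have h7 := Nat.find_min hex hj
          push_neg at h7
          rwa [Nat.sub_add_cancel hpos'] at h7
      exact ⟨Nat.find hex, hk2, hk1⟩
  -- the pointwise / measure bound on each annulus
  have hterm : ∀ k, (∫⁻ y in S k, ENNReal.ofReal ‖h ‖y‖‖)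
      ≤ ENNReal.ofReal (h ε * q^(k+1)) * W := by
    intro k
    have hbd : ∀ y ∈ S k, ENNReal.ofReal ‖h ‖y‖‖ ≤ ENNReal.ofReal (A^(k+1) * h ε) := by
      intro y hy
      have h1 : r (k+1) ≤ ‖y‖ := by
        have := hy.2; simpa [mem_ball_zero_iff, not_lt] using this
      have h2 : ‖y‖ < r k := by simpa [mem_ball_zero_iff] using hy.1
      have hym : ‖y‖ ∈ Ioo (0:ℝ) 1 :=
        ⟨lt_of_lt_of_le (hr0 _) h1, lt_trans h2 (hr1 k)⟩
      have h3 : h ‖y‖ ≤ h (r (k+1)) := hmono (hrmem (k+1)) hym h1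
      have h4 : h ‖y‖ ≤ A^(k+1) * h ε := le_trans h3 (hAk (k+1))
      have h5 : ‖h ‖y‖‖ = h ‖y‖ := by
        rw [Real.norm_eq_abs, abs_of_pos (hpos _ hym)]
      rw [h5]
      exact ENNReal.ofReal_le_ofReal h4
    calc (∫⁻ y in S k, ENNReal.ofReal ‖h ‖y‖‖)
        ≤ ∫⁻ _ in S k, ENNReal.ofReal (A^(k+1) * h ε) :=
          setLIntegral_mono' (hSm k) hbd
      _ = ENNReal.ofReal (A^(k+1) * h ε) * volume (S k) := setLIntegral_const _ _
      _ ≤ ENNReal.ofReal (A^(k+1) * h ε) * (ENNReal.ofReal ((r k)^n) * W) := by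
          refine mul_le_mul_right ?_ _
          calc volume (S k) ≤ volume (Metric.ball (0:E) (r k)) := measure_mono diff_subset
            _ = ENNReal.ofReal ((r k)^n) * W := by
                rw [Measure.addHaar_ball volume (0:E) (hr0 k).le, hWdef,
                  show Module.finrank ℝ E = n from finrank_euclideanSpace_fin]
      _ = ENNReal.ofReal (A^(k+1) * h ε * (r k)^n) * W := by
          rw [← mul_assoc, ← ENNReal.ofReal_mul (mul_nonneg (by positivity) (hpos ε hεmem).le)]
      _ ≤ ENNReal.ofReal (h ε * q^(k+1)) * W := by
          refine mul_le_mul_left (ENNReal.ofReal_le_ofReal ?_) _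
          have hrkn : (r k)^n = (ε^n)^(2^k) := by
            rw [hrdef]; rw [← pow_mul, ← pow_mul, Nat.mul_comm]
          have h6 : (ε^n)^(2^k) ≤ (ε^n)^(k+1) := by
            refine pow_le_pow_of_le_one (by positivity) ?_ (Nat.lt_two_pow_self (n := k))
            exact pow_le_one₀ hε0.le hε1.le
          have hεh := (hpos ε hεmem).le
          calc A^(k+1) * h ε * (r k)^n = A^(k+1) * h ε * (ε^n)^(2^k) := by rw [hrkn]
            _ ≤ A^(k+1) * h ε * (ε^n)^(k+1) := by
                refine mul_le_mul_of_nonneg_left h6 (by positivity)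
            _ = h ε * q^(k+1) := by rw [hqdef, mul_pow]; ring
  -- assemble
  set f : E → ℝ≥0∞ := fun y => ENNReal.ofReal ‖h ‖y‖‖ with hfdef
  have hae : (Metric.ball (0:E) ε \ ({0} : Set E)) =ᵐ[volume] Metric.ball (0:E) ε := by
    refine diff_ae_eq_self.mpr ?_
    exact measure_mono_null inter_subset_right (measure_singleton 0)
  have hL1 : (∫⁻ y in Metric.ball (0:E) ε, f y)
      = ∑' k, ∫⁻ y in S k, f y := by
    have hae' : (⋃ k, S k) =ᵐ[volume] Metric.ball (0:E) ε := by rw [hSU]; exact hae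
    rw [← setLIntegral_congr hae', lintegral_iUnion hSm hSdisj]
  have hgeo : ∑' k : ℕ, (ENNReal.ofReal q)^(k+1) ≤ ENNReal.ofReal q * 2 := by
    have : ∑' k : ℕ, (ENNReal.ofReal q)^(k+1)
        = ENNReal.ofReal q * ∑' k : ℕ, (ENNReal.ofReal q)^k := by
      rw [← ENNReal.tsum_mul_left]
      exact tsum_congr fun k => (pow_succ' _ _)
    rw [this, ENNReal.tsum_geometric]
    refine mul_le_mul_right ?_ _
    have hq12 : ENNReal.ofReal q ≤ 1/2 := by
      rw [show (1/2 : ℝ≥0∞) = ENNReal.ofReal (1/2) by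
        rw [one_div, one_div, ENNReal.ofReal_inv_of_pos two_pos, ENNReal.ofReal_ofNat]]
      exact ENNReal.ofReal_le_ofReal hq.le
    calc (1 - ENNReal.ofReal q)⁻¹ ≤ (1 - 1/2 : ℝ≥0∞)⁻¹ := by
          exact ENNReal.inv_le_inv' (tsub_le_tsub_left hq12 1)
      _ = 2 := by
          rw [show (1 - 1/2 : ℝ≥0∞) = 1/2 by
            rw [show (1:ℝ≥0∞)/2 = 1/2 from rfl]
            exact ENNReal.sub_half ENNReal.one_ne_top]
          simp [ENNReal.inv_div]
  have hεh := (hpos ε hεmem).le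
  have hL2 : (∫⁻ y in Metric.ball (0:E) ε, f y)
      ≤ ENNReal.ofReal (h ε) * (ENNReal.ofReal q * 2) * W := by
    rw [hL1]
    calc ∑' k, ∫⁻ y in S k, f y
        ≤ ∑' k, ENNReal.ofReal (h ε * q^(k+1)) * W := ENNReal.tsum_le_tsum hterm
      _ = (∑' k : ℕ, ENNReal.ofReal (h ε) * (ENNReal.ofReal q)^(k+1)) * W := by
          rw [ENNReal.tsum_mul_right]
          congr 1
          exact tsum_congr fun k => by
            rw [ENNReal.ofReal_mul hεh, ENNReal.ofReal_pow hq0.le]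
      _ = ENNReal.ofReal (h ε) * (∑' k : ℕ, (ENNReal.ofReal q)^(k+1)) * W := by
          rw [ENNReal.tsum_mul_left]
      _ ≤ ENNReal.ofReal (h ε) * (ENNReal.ofReal q * 2) * W := by
          exact mul_le_mul_left (mul_le_mul_right hgeo _) _
  -- from Bochner integral to lintegral
  have hfin : ENNReal.ofReal (h ε) * (ENNReal.ofReal q * 2) * W ≠ ⊤ := by
    exact ENNReal.mul_ne_top (ENNReal.mul_ne_top ENNReal.ofReal_ne_top
      (ENNReal.mul_ne_top ENNReal.ofReal_ne_top (by norm_num))) hWt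
  have hstep1 : (∫ y in Metric.ball (0:E) ε, h ‖y‖)
      ≤ (∫⁻ y in Metric.ball (0:E) ε, f y).toReal := by
    calc (∫ y in Metric.ball (0:E) ε, h ‖y‖)
        ≤ ‖∫ y in Metric.ball (0:E) ε, h ‖y‖‖ := le_abs_self _
      _ ≤ (∫⁻ y in Metric.ball (0:E) ε, f y).toReal :=
          norm_integral_le_lintegral_norm _
  calc (∫ y in Metric.ball (0:E) ε, h ‖y‖)
      ≤ (∫⁻ y in Metric.ball (0:E) ε, f y).toReal := hstep1
    _ ≤ (ENNReal.ofReal (h ε) * (ENNReal.ofReal q * 2) * W).toReal :=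
        ENNReal.toReal_mono hfin hL2
    _ = h ε * (q * 2) * W.toReal := by
        rw [ENNReal.toReal_mul, ENNReal.toReal_mul, ENNReal.toReal_mul,
          ENNReal.toReal_ofReal hεh, ENNReal.toReal_ofReal hq0.le]
        norm_num
    _ = 2 * A * W.toReal * h ε * ε ^ n := by rw [hqdef]; ring
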